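/- Let H be a 1-extendable graph. The map sending a cover set 𝓘 ∈ 𝒞(H) to the graph H_𝓘 obtained from H by adding all possible edges inside each part of 𝓘 is a bijection between 𝒞(H) and the set of graphs G ∈ ℰ(H) whose free subgraph is a disjoint union of cliques, each of which is a (not necessarily maximal) barrier of G. -/

import Mathlib

open SimpleGraph

variable {V : Type}

/-- The number of perfect matchings of a simple graph. -/
noncomputable def numPM (G : SimpleGraph V) : ℕ :=
  Nat.card {M : G.Subgraph // M.IsPerfectMatching}

/-- An edge, given by its two endpoints, is extendable if it lies in some perfect matching. -/
def IsExtendableEdge (G : SimpleGraph V) (u v : V) : Prop :=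
  ∃ M : G.Subgraph, M.IsPerfectMatching ∧ M.Adj u v

/-- A connected graph is 1-extendable if it has a perfect matching and every edge is
extendable. -/
def OneExtendable (G : SimpleGraph V) : Prop :=
  G.Connected ∧ (∃ M : G.Subgraph, M.IsPerfectMatching) ∧
    ∀ ⦃u v : V⦄, G.Adj u v → IsExtendableEdge G u v

/-- The number of connected components of `G - S` with an odd number of vertices. -/
noncomputable def oddComponentCount (G : SimpleGraph V) (S : Set V) : ℕ :=
  Nat.card {c : (G.induce (Sᶜ : Set V)).ConnectedComponent // Odd (Nat.card c.supp)}

/-- `S` is a barrier of `G` if the number of odd components of `G - S` equals `|S|`. -/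
def IsBarrier (G : SimpleGraph V) (S : Set V) : Prop :=
  oddComponentCount G S = S.ncard

/-- A maximal barrier is a barrier not properly contained in any other barrier. -/
def IsMaximalBarrier (G : SimpleGraph V) (S : Set V) : Prop :=
  IsBarrier G S ∧ ∀ T : Set V, IsBarrier G T → S ⊆ T → T = S

/-- `ℰ(H)`: the supergraphs of `H` on the same vertex set with the same number of
perfect matchings. -/
def elemSupergraphs (H : SimpleGraph V) : Set (SimpleGraph V) :=
  {G | H ≤ G ∧ numPM G = numPM H}

/-- The excess of a graph: `e(G) - n(G)^2/4`. -/
noncomputable def excess (G : SimpleGraph V) : ℚ :=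
  (G.edgeSet.ncard : ℚ) - (Nat.card V : ℚ) ^ 2 / 4

/-- The spanning subgraph of `G` consisting of the free (non-extendable) edges. -/
def freeSubgraph (G : SimpleGraph V) : SimpleGraph V where
  Adj u v := G.Adj u v ∧ ¬ IsExtendableEdge G u v
  symm := by
    constructor
    intro u v h
    refine ⟨h.1.symm, fun hc => h.2 ?_⟩
    obtain ⟨M, hM, hadj⟩ := hc
    exact ⟨M, hM, hadj.symm⟩
  loopless := ⟨fun v h => G.loopless.irrefl v h.1⟩

/-- The graph obtained from `H` by simultaneously augmenting `m` ears; the `j`-th ear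
joins `x j` to `y j` and has `ℓ j` internal vertices (its order). -/
def earsAugment (H : SimpleGraph V) (m : ℕ) (x y : Fin m → V) (ℓ : Fin m → ℕ) :
    SimpleGraph (V ⊕ (Σ j : Fin m, Fin (ℓ j))) :=
  SimpleGraph.fromRel fun a b =>
    match a, b with
    | Sum.inl u, Sum.inl v => H.Adj u v ∨ ∃ j, ℓ j = 0 ∧ u = x j ∧ v = y j
    | Sum.inl u, Sum.inr ⟨j, i⟩ => u = x j ∧ (i : ℕ) = 0
    | Sum.inr ⟨j, i⟩, Sum.inl u => u = y j ∧ (i : ℕ) + 1 = ℓ j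
    | Sum.inr ⟨j, i⟩, Sum.inr ⟨j', i'⟩ => j = j' ∧ (i : ℕ) + 1 = (i' : ℕ)

/-- Validity conditions for a system of (even-order) ears attached to `H`:
distinct endpoints, even orders, trivial ears are new edges, and distinct trivial ears
are distinct edges. -/
def IsEarSystem (H : SimpleGraph V) (m : ℕ) (x y : Fin m → V) (ℓ : Fin m → ℕ) : Prop :=
  (∀ j, x j ≠ y j) ∧ (∀ j, Even (ℓ j)) ∧
  (∀ j, ℓ j = 0 → ¬ H.Adj (x j) (y j)) ∧
  (∀ j j', j ≠ j' → ℓ j = 0 → ℓ j' = 0 → s(x j, y j) ≠ s(x j', y j'))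

/-- A single-ear augmentation of `H` by an ear from `a` to `b` with `l` internal
vertices. -/
def singleEar (H : SimpleGraph V) (a b : V) (l : ℕ) :
    SimpleGraph (V ⊕ (Σ _ : Fin 1, Fin l)) :=
  earsAugment H 1 (fun _ => a) (fun _ => b) (fun _ => l)

/-- `B` meets more than one connected component of `H - S`. -/
def MeetsMultipleComponents (H : SimpleGraph V) (S B : Set V) : Prop :=
  ∃ c₁ c₂ : (H.induce (Sᶜ : Set V)).ConnectedComponent, c₁ ≠ c₂ ∧
    (∃ v ∈ c₁.supp, (v : V) ∈ B) ∧ (∃ v ∈ c₂.supp, (v : V) ∈ B)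

/-- Two barriers conflict if they intersect, or one meets more than one component of the
graph minus the other. -/
def BarriersConflict (H : SimpleGraph V) (B₁ B₂ : Set V) : Prop :=
  (B₁ ∩ B₂).Nonempty ∨ MeetsMultipleComponents H B₂ B₁ ∨ MeetsMultipleComponents H B₁ B₂

/-- A cover set of `H`: a partition of `V(H)` into pairwise non-conflicting nonempty
barriers. -/
def IsCoverSet (H : SimpleGraph V) (I : Set (Set V)) : Prop :=
  (∀ B ∈ I, B.Nonempty ∧ IsBarrier H B) ∧
  (∀ B₁ ∈ I, ∀ B₂ ∈ I, B₁ ≠ B₂ → ¬ BarriersConflict H B₁ B₂) ∧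
  ∀ v : V, ∃! B, B ∈ I ∧ v ∈ B

/-- The order `𝓘₁ ⪯ 𝓘₂` on cover sets: every part of `𝓘₁` is contained in a part of
`𝓘₂`. -/
def CoverLE (I₁ I₂ : Set (Set V)) : Prop :=
  ∀ B₁ ∈ I₁, ∃ B₂ ∈ I₂, B₁ ⊆ B₂

/-- The graph `H_𝓘` obtained from `H` by adding all possible edges inside each part of
`𝓘`. -/
def fillGraph (H : SimpleGraph V) (I : Set (Set V)) : SimpleGraph V :=
  H ⊔ SimpleGraph.fromRel fun u v => ∃ B ∈ I, u ∈ B ∧ v ∈ B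

/-- The graph obtained from `H` by adding all possible edges inside the set `X`. -/
def fillSide (H : SimpleGraph V) (X : Set V) : SimpleGraph V :=
  H ⊔ SimpleGraph.fromRel fun u v => u ∈ X ∧ v ∈ X

/-- A (connected, 2-regular) cycle graph. -/
def IsCycleGraph (G : SimpleGraph V) : Prop :=
  G.Connected ∧ ∀ v : V, (G.neighborSet v).ncard = 2

/-- An ear of `H`: a path `f 0, f 1, ..., f k` whose endpoints have degree at least three
and whose internal vertices have degree exactly two. -/
def IsEar (H : SimpleGraph V) (k : ℕ) (f : Fin (k + 1) → V) : Prop :=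
  1 ≤ k ∧ Function.Injective f ∧
  (∀ i : Fin k, H.Adj (f i.castSucc) (f i.succ)) ∧
  3 ≤ (H.neighborSet (f 0)).ncard ∧
  3 ≤ (H.neighborSet (f (Fin.last k))).ncard ∧
  ∀ i : Fin (k + 1), i ≠ 0 → i ≠ Fin.last k → (H.neighborSet (f i)).ncard = 2

/-- The edge `uv` lies on the path `f 0, ..., f k`. -/
def EdgeOnPath (k : ℕ) (f : Fin (k + 1) → V) (u v : V) : Prop :=
  ∃ i : Fin k, (u = f i.castSucc ∧ v = f i.succ) ∨ (v = f i.castSucc ∧ u = f i.succ)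

/-- A graph is almost 1-extendable if it has a perfect matching and all of its free edges
lie on a single ear (the whole graph counting as an ear when it is a cycle). -/
def AlmostOneExtendable (G : SimpleGraph V) : Prop :=
  (∃ M : G.Subgraph, M.IsPerfectMatching) ∧
  (IsCycleGraph G ∨
    ∃ (k : ℕ) (f : Fin (k + 1) → V), IsEar G k f ∧
      ∀ u v : V, G.Adj u v → ¬ IsExtendableEdge G u v → EdgeOnPath k f u v)

/-- A graph with at least three vertices is 2-connected if no single vertex deletion
disconnects it. -/
def TwoConnected (G : SimpleGraph V) : Prop :=
  3 ≤ Nat.card V ∧ ∀ v : V, (G.induce ({v}ᶜ : Set V)).Connected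

/-- Membership in the class `𝓜ᵖ`: 2-connected graphs with between 2 and `p` perfect
matchings which are 1-extendable or almost 1-extendable. -/
def MemM (p : ℕ) (G : SimpleGraph V) : Prop :=
  TwoConnected G ∧ 2 ≤ numPM G ∧ numPM G ≤ p ∧
    (OneExtendable G ∨ AlmostOneExtendable G)

/-- `a` and `b` lie in different connected components of `H - B`. -/
def InDiffComponents (H : SimpleGraph V) (B : Set V) (a b : V) : Prop :=
  ∃ (ha : a ∈ (Bᶜ : Set V)) (hb : b ∈ (Bᶜ : Set V)),
    (H.induce (Bᶜ : Set V)).connectedComponentMk ⟨a, ha⟩ ≠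
      (H.induce (Bᶜ : Set V)).connectedComponentMk ⟨b, hb⟩

/-- The `a`-th vertex `x_a` along the `j`-th ear `x 0 = x_0, x_1, ..., x_{ℓ j}, x_{ℓ j + 1} = y j`. -/
def earVertex {m : ℕ} (x y : Fin m → V) (ℓ : Fin m → ℕ) (j : Fin m) (a : ℕ) :
    V ⊕ (Σ j : Fin m, Fin (ℓ j)) :=
  if h : 0 < a ∧ a ≤ ℓ j then Sum.inr ⟨j, ⟨a - 1, by omega⟩⟩
  else if a = 0 then Sum.inl (x j) else Sum.inl (y j)

/-- Non-refinability of a two-ear augmentation: neither single-ear augmentation is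
1-extendable. -/
def NonRefinableSystem (H : SimpleGraph V) (m : ℕ) (x y : Fin m → V) (ℓ : Fin m → ℕ) :
    Prop :=
  ∀ j : Fin m, m = 2 → ¬ OneExtendable (singleEar H (x j) (y j) (ℓ j))
/-!
Fix a perfect matching `M` of `H`. Counting odd components of `G - S` against the vertices
they match into `S` gives `odd(G - S) ≤ #(vertices matched into S) ≤ |S|`, so `S` is a barrier
exactly when no `M`-edge lies inside `S` and every component of `G - S` has at most one vertex
matched into `S`. This criterion only sees `M` and the components of `G - S`, so it transfers
between `H` and a supergraph `G` containing `M` whenever the two graphs have the same components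
after deleting `S`.

For a cover set `𝓘`, an edge added inside a part `B'` stays inside one component of `H - B` for
every other part `B`, so every part is a barrier of `H_𝓘`. Hence no perfect matching of `H_𝓘`
uses an added edge, which gives `Φ(H_𝓘) = Φ(H)` and shows that the added edges are exactly
the free ones. Since barriers of the 1-extendable graph `H` are independent, `𝓘` can be read off
from `H_𝓘`. Conversely, the parts of a graph `G` in the target set are barriers of `H` as well.
Every component of `H - B` is odd, so it has exactly one vertex matched into `B`, and therefore
the components of `G - B` are those of `H - B`. This gives the non-conflict conditions.
-/

section PerfectMatching

variable {G : SimpleGraph V} {M : G.Subgraph} {S : Set V}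

def matchedInto (M : G.Subgraph) (S : Set V) : Set (Sᶜ : Set V) :=
  {v | ∃ s ∈ S, M.Adj v s}

namespace SimpleGraph.Subgraph.IsPerfectMatching

theorem exists_injective_partner (hM : M.IsPerfectMatching) :
    ∃ f : matchedInto M S → S, Function.Injective f ∧ ∀ v, M.Adj v.1.1 (f v).1 := by
  choose f hfS hf using fun v : matchedInto M S => v.2
  refine ⟨fun v => ⟨f v, hfS v⟩, fun u v huv => ?_, hf⟩
  have hsame : f u = f v := congrArg Subtype.val huv
  exact Subtype.ext (Subtype.ext (hM.1.eq_of_adj_right (hf u) (hsame ▸ hf v)))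

variable [Finite V]

theorem even_ncard_of_closed (hM : M.IsPerfectMatching) {A : Set V}
    (hA : ∀ v ∈ A, ∀ w, M.Adj v w → w ∈ A) : Even A.ncard := by
  have hAM : (M.induce A).IsMatching := by
    intro v hv
    obtain ⟨w, hw, huniq⟩ := Subgraph.isPerfectMatching_iff.mp hM v
    exact ⟨w, ⟨hv, hA v hv w hw, hw⟩, fun y hy => huniq y hy.2.2⟩
  have : Fintype A := Fintype.ofFinite A
  rw [Set.ncard_eq_toFinset_card' A]
  exact @Subgraph.IsMatching.even_card _ _ _ this hAM

theorem odd_card_supp_iff (hM : M.IsPerfectMatching) (c : (G.induce Sᶜ).ConnectedComponent) :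
    Odd (Nat.card c.supp) ↔ Odd (c.supp ∩ matchedInto M S).ncard := by
  -- the vertices of `c` not matched into `S` are matched among themselves
  have hclosed : Even (Subtype.val '' (c.supp \ matchedInto M S)).ncard := by
    refine hM.even_ncard_of_closed ?_
    rintro _ ⟨v, ⟨hvc, hvX⟩, rfl⟩ w hvw
    have hwS : w ∉ S := fun hwS => hvX ⟨w, hwS, hvw⟩
    refine ⟨⟨w, hwS⟩, ⟨?_, ?_⟩, rfl⟩
    · exact (c.mem_supp_congr_adj (show (G.induce Sᶜ).Adj v ⟨w, hwS⟩ from M.adj_sub hvw)).1 hvc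
    · rintro ⟨s, hs, hws⟩
      exact v.2 (by rwa [hM.1.eq_of_adj_left hvw.symm hws])
  rw [Set.ncard_image_of_injective _ Subtype.val_injective] at hclosed
  rw [Nat.card_coe_set_eq, ← Set.ncard_inter_add_ncard_sdiff_eq_ncard c.supp (matchedInto M S)]
  simp [Nat.odd_add, hclosed]

theorem exists_mem_supp_matchedInto (hM : M.IsPerfectMatching)
    {c : (G.induce Sᶜ).ConnectedComponent} (hc : Odd (Nat.card c.supp)) :
    ∃ v ∈ c.supp, v ∈ matchedInto M S :=
  Set.nonempty_of_ncard_ne_zero ((hM.odd_card_supp_iff c).1 hc).pos.ne'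

theorem odd_card_supp_of_injOn (hM : M.IsPerfectMatching)
    (hinj : Set.InjOn (G.induce Sᶜ).connectedComponentMk (matchedInto M S))
    {v : (Sᶜ : Set V)} (hv : v ∈ matchedInto M S) :
    Odd (Nat.card ((G.induce Sᶜ).connectedComponentMk v).supp) := by
  have hsingle : ((G.induce Sᶜ).connectedComponentMk v).supp ∩ matchedInto M S = {v} := by
    ext w
    exact ⟨fun ⟨hw, hwX⟩ => hinj hwX hv hw, by rintro rfl; exact ⟨rfl, hv⟩⟩
  rw [hM.odd_card_supp_iff, hsingle, Set.ncard_singleton]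
  exact odd_one

theorem card_matchedInto_le (hM : M.IsPerfectMatching) :
    Nat.card (matchedInto M S) ≤ S.ncard := by
  obtain ⟨f, hf, -⟩ := hM.exists_injective_partner
  exact Nat.card_coe_set_eq S ▸ Nat.card_le_card_of_injective f hf

theorem card_matchedInto_eq_ncard_iff (hM : M.IsPerfectMatching) :
    Nat.card (matchedInto M S) = S.ncard ↔ ∀ s ∈ S, ∀ t ∈ S, ¬ M.Adj s t := by
  obtain ⟨f, hf, hfM⟩ := hM.exists_injective_partner
  have hsurj : Nat.card (matchedInto M S) = Nat.card S ↔ Function.Surjective f :=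
    ⟨fun h => ((Nat.bijective_iff_injective_and_card f).2 ⟨hf, h⟩).2,
      fun h => Nat.card_eq_of_bijective f ⟨hf, h⟩⟩
  rw [← Nat.card_coe_set_eq S, hsurj]
  constructor
  · intro hsurj s hs t ht hst
    obtain ⟨v, hv⟩ := hsurj ⟨s, hs⟩
    have hvt : (v : V) = t := hM.1.eq_of_adj_left (hv ▸ hfM v).symm hst
    exact v.1.2 (hvt ▸ ht)
  · intro hS s
    obtain ⟨w, hsw, -⟩ := Subgraph.isPerfectMatching_iff.mp hM s
    have hwS : w ∉ S := fun hwS => hS s s.2 w hwS hsw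
    refine ⟨⟨⟨w, hwS⟩, s, s.2, hsw.symm⟩, Subtype.ext ?_⟩
    exact hM.1.eq_of_adj_left (hfM _) hsw.symm

theorem exists_injective_oddComponent (hM : M.IsPerfectMatching) :
    ∃ g : {c : (G.induce Sᶜ).ConnectedComponent // Odd (Nat.card c.supp)} → matchedInto M S,
      Function.Injective g ∧ ∀ c, (g c : (Sᶜ : Set V)) ∈ c.1.supp := by
  choose g hgc hgX using fun c : {c : (G.induce Sᶜ).ConnectedComponent // Odd (Nat.card c.supp)} =>
    hM.exists_mem_supp_matchedInto c.2
  refine ⟨fun c => ⟨g c, hgX c⟩, fun c₁ c₂ h => Subtype.ext ?_, hgc⟩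
  rw [← hgc c₁, ← hgc c₂]
  exact congrArg (fun v : matchedInto M S => (G.induce Sᶜ).connectedComponentMk v.1) h

theorem oddComponentCount_le_card_matchedInto (hM : M.IsPerfectMatching) :
    oddComponentCount G S ≤ Nat.card (matchedInto M S) := by
  obtain ⟨g, hg, -⟩ := hM.exists_injective_oddComponent
  exact Nat.card_le_card_of_injective g hg

theorem oddComponentCount_eq_card_matchedInto_iff (hM : M.IsPerfectMatching) :
    oddComponentCount G S = Nat.card (matchedInto M S) ↔
      Set.InjOn (G.induce Sᶜ).connectedComponentMk (matchedInto M S) := by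
  obtain ⟨g, hg, hgc⟩ := hM.exists_injective_oddComponent
  constructor
  · intro hcard u hu v hv huv
    have hsurj := ((Nat.bijective_iff_injective_and_card g).2 ⟨hg, hcard⟩).2
    obtain ⟨cu, hcu⟩ := hsurj ⟨u, hu⟩
    obtain ⟨cv, hcv⟩ := hsurj ⟨v, hv⟩
    have hc : cu = cv := by
      refine Subtype.ext ?_
      rw [← hgc cu, ← hgc cv, hcu, hcv]
      exact huv
    rw [← hc, hcu] at hcv
    exact congrArg Subtype.val hcv
  · intro hinj
    refine le_antisymm (Nat.card_le_card_of_injective g hg) ?_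
    let k : matchedInto M S → {c : (G.induce Sᶜ).ConnectedComponent // Odd (Nat.card c.supp)} :=
      fun v => ⟨_, hM.odd_card_supp_of_injOn hinj v.2⟩
    exact Nat.card_le_card_of_injective k
      fun u v huv => Subtype.ext (hinj u.2 v.2 (congrArg Subtype.val huv))

theorem isBarrier_iff (hM : M.IsPerfectMatching) :
    IsBarrier G S ↔ (∀ s ∈ S, ∀ t ∈ S, ¬ M.Adj s t) ∧
      Set.InjOn (G.induce Sᶜ).connectedComponentMk (matchedInto M S) := by
  rw [← hM.card_matchedInto_eq_ncard_iff, ← hM.oddComponentCount_eq_card_matchedInto_iff]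
  have h₁ := hM.oddComponentCount_le_card_matchedInto (S := S)
  have h₂ := hM.card_matchedInto_le (S := S)
  unfold IsBarrier
  constructor
  · intro h; constructor <;> omega
  · intro h; omega

end SimpleGraph.Subgraph.IsPerfectMatching

theorem IsBarrier.not_adj_of_isPerfectMatching [Finite V] (hS : IsBarrier G S)
    (hM : M.IsPerfectMatching) {u v : V} (hu : u ∈ S) (hv : v ∈ S) : ¬ M.Adj u v :=
  (hM.isBarrier_iff.1 hS).1 u hu v hv

end PerfectMatching

theorem SimpleGraph.Reachable.of_forall_adj {W : Type} {G₁ G₂ : SimpleGraph W}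
    (hadj : ∀ u v, G₂.Adj u v → G₁.Reachable u v) {u v : W} (h : G₂.Reachable u v) :
    G₁.Reachable u v := by
  rw [reachable_iff_reflTransGen] at h ⊢
  exact Relation.reflTransGen_closed (fun a b hab => (reachable_iff_reflTransGen a b).1
    (hadj a b hab)) _ _ h

theorem meetsMultipleComponents_iff {H : SimpleGraph V} {S B : Set V} :
    MeetsMultipleComponents H S B ↔
      ∃ u v : (Sᶜ : Set V), ↑u ∈ B ∧ ↑v ∈ B ∧ ¬ (H.induce Sᶜ).Reachable u v := by
  constructor
  · rintro ⟨_, _, hne, ⟨u, rfl, hu⟩, ⟨v, rfl, hv⟩⟩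
    exact ⟨u, v, hu, hv, fun h => hne (ConnectedComponent.sound h)⟩
  · rintro ⟨u, v, hu, hv, huv⟩
    exact ⟨_, _, fun h => huv (ConnectedComponent.exact h), ⟨u, rfl, hu⟩, ⟨v, rfl, hv⟩⟩

theorem Setoid.IsPartition.eq_of_forall_exists_mem_iff {α : Type*} {c₁ c₂ : Set (Set α)}
    (h₁ : Setoid.IsPartition c₁) (h₂ : Setoid.IsPartition c₂)
    (h : ∀ x y, (∃ s ∈ c₁, x ∈ s ∧ y ∈ s) ↔ (∃ s ∈ c₂, x ∈ s ∧ y ∈ s)) : c₁ = c₂ := by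
  have hrel : ∀ {c : Set (Set α)} (hc : Setoid.IsPartition c) (x y : α),
      Setoid.mkClasses c hc.2 x y ↔ ∃ s ∈ c, x ∈ s ∧ y ∈ s := by
    intro c hc x y
    constructor
    · intro hxy
      obtain ⟨s, ⟨hs, hx⟩, -⟩ := hc.2 x
      exact ⟨s, hs, hx, hxy s hs hx⟩
    · rintro ⟨s, hs, hx, hy⟩ t ht hxt
      rwa [Setoid.eq_of_mem_eqv_class hc.2 ht hxt hs hx]
  rw [← Setoid.classes_mkClasses c₁ h₁, ← Setoid.classes_mkClasses c₂ h₂]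
  congr 1
  ext x y
  rw [hrel h₁, hrel h₂, h]

section Supergraph

variable {H G : SimpleGraph V}

theorem SimpleGraph.Subgraph.IsPerfectMatching.toSubgraph_of_le {M : H.Subgraph}
    (hM : M.IsPerfectMatching) (hle : H ≤ G) :
    (G.toSubgraph M.spanningCoe (M.spanningCoe_le.trans hle)).IsPerfectMatching :=
  (IsPerfectMatching.toSubgraph_iff _).2 hM

theorem IsExtendableEdge.mono (hle : H ≤ G) {u v : V} (h : IsExtendableEdge H u v) :
    IsExtendableEdge G u v := by
  obtain ⟨M, hM, huv⟩ := h
  exact ⟨G.toSubgraph M.spanningCoe (M.spanningCoe_le.trans hle),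
    hM.toSubgraph_of_le hle, huv⟩

theorem numPM_eq_iff [Finite V] (hle : H ≤ G) :
    numPM G = numPM H ↔
      ∀ M : G.Subgraph, M.IsPerfectMatching → ∀ u v, M.Adj u v → H.Adj u v := by
  let ι : {M : H.Subgraph // M.IsPerfectMatching} → {M : G.Subgraph // M.IsPerfectMatching} :=
    fun M => ⟨G.toSubgraph M.1.spanningCoe (M.1.spanningCoe_le.trans hle),
      M.2.toSubgraph_of_le hle⟩
  have hι : Function.Injective ι := by
    rintro ⟨M, hM⟩ ⟨N, hN⟩ h
    have hadj : M.Adj = N.Adj := congrArg (fun X : {M : G.Subgraph // _} => X.1.Adj) h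
    exact Subtype.ext (Subgraph.ext (by rw [hM.2.verts_eq_univ, hN.2.verts_eq_univ]) hadj)
  have hcard : numPM G = numPM H ↔ Function.Surjective ι :=
    ⟨fun h => ((Nat.bijective_iff_injective_and_card ι).2 ⟨hι, h.symm⟩).2,
      fun h => (Nat.card_eq_of_bijective ι ⟨hι, h⟩).symm⟩
  rw [hcard]
  constructor
  · intro hsurj M hM u v huv
    obtain ⟨N, hN⟩ := hsurj ⟨M, hM⟩
    have hN' : (ι N).1.Adj u v := by rw [hN]; exact huv
    exact N.1.adj_sub hN'
  · rintro hall ⟨M, hM⟩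
    refine ⟨⟨H.toSubgraph M.spanningCoe (fun u v => hall M hM u v),
      (Subgraph.IsPerfectMatching.toSubgraph_iff _).2 hM⟩, Subtype.ext ?_⟩
    exact Subgraph.ext hM.2.verts_eq_univ.symm rfl

variable [Finite V]

theorem IsBarrier.of_le (hle : H ≤ G) {M : H.Subgraph} (hM : M.IsPerfectMatching) {S : Set V}
    (hS : IsBarrier G S) : IsBarrier H S := by
  obtain ⟨hinside, hinj⟩ := (hM.toSubgraph_of_le hle).isBarrier_iff.1 hS
  refine hM.isBarrier_iff.2 ⟨hinside, fun u hu v hv huv => hinj hu hv ?_⟩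
  exact ConnectedComponent.sound ((ConnectedComponent.exact huv).mono (comap_monotone _ hle))

theorem IsBarrier.of_le_of_reachable (hle : H ≤ G) {M : H.Subgraph} (hM : M.IsPerfectMatching)
    {S : Set V} (hreach : ∀ u v : (Sᶜ : Set V),
      (G.induce Sᶜ).Reachable u v → (H.induce Sᶜ).Reachable u v)
    (hS : IsBarrier H S) : IsBarrier G S := by
  obtain ⟨hinside, hinj⟩ := hM.isBarrier_iff.1 hS
  refine (hM.toSubgraph_of_le hle).isBarrier_iff.2
      ⟨hinside, fun u hu v hv huv => hinj hu hv ?_⟩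
  exact ConnectedComponent.sound (hreach u v (ConnectedComponent.exact huv))

theorem OneExtendable.not_adj_of_isBarrier (hH : OneExtendable H) {B : Set V}
    (hB : IsBarrier H B) {u v : V} (hu : u ∈ B) (hv : v ∈ B) : ¬ H.Adj u v := fun huv =>
  let ⟨_, hM, hMuv⟩ := hH.2.2 huv
  hB.not_adj_of_isPerfectMatching hM hu hv hMuv

theorem OneExtendable.odd_card_supp_of_isBarrier (hH : OneExtendable H) {B : Set V}
    (hBne : B.Nonempty) (hB : IsBarrier H B) (c : (H.induce Bᶜ).ConnectedComponent) :
    Odd (Nat.card c.supp) := by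
  obtain ⟨b, hb⟩ := hBne
  obtain ⟨v, hv⟩ := c.nonempty_supp
  obtain ⟨p⟩ := hH.1.preconnected v b
  obtain ⟨d, -, ⟨y, hy, hyd⟩, hdout⟩ := p.exists_boundary_dart (Subtype.val '' c.supp)
    ⟨v, hv, rfl⟩ (fun ⟨w, _, hw⟩ => w.2 (hw ▸ hb))
  have hHy : H.Adj y d.snd := hyd ▸ d.adj
  have hzB : d.snd ∈ B := by
    by_contra hz
    exact hdout ⟨⟨d.snd, hz⟩, (c.mem_supp_congr_adj (show (H.induce Bᶜ).Adj y ⟨d.snd, hz⟩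
      from hHy)).1 hy, rfl⟩
  obtain ⟨M, hM, hMy⟩ := hH.2.2 hHy
  rw [← (c.mem_supp_iff y).1 hy]
  exact hM.odd_card_supp_of_injOn (hM.isBarrier_iff.1 hB).2
    ⟨d.snd, hzB, hMy⟩

theorem OneExtendable.reachable_of_le (hH : OneExtendable H) (hle : H ≤ G) {B : Set V}
    (hBne : B.Nonempty) (hBH : IsBarrier H B) (hBG : IsBarrier G B) {u v : (Bᶜ : Set V)}
    (huv : (G.induce Bᶜ).Reachable u v) : (H.induce Bᶜ).Reachable u v := by
  obtain ⟨M, hM⟩ := hH.2.1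
  have hinj := ((hM.toSubgraph_of_le hle).isBarrier_iff.1 hBG).2
  obtain ⟨a, ha, haX⟩ := hM.exists_mem_supp_matchedInto (hH.odd_card_supp_of_isBarrier hBne hBH
    ((H.induce Bᶜ).connectedComponentMk u))
  obtain ⟨b, hb, hbX⟩ := hM.exists_mem_supp_matchedInto (hH.odd_card_supp_of_isBarrier hBne hBH
    ((H.induce Bᶜ).connectedComponentMk v))
  have hau := ConnectedComponent.exact ha
  have hbv := ConnectedComponent.exact hb
  have hab : a = b := hinj haX hbX <| ConnectedComponent.sound <|
    ((hau.mono (comap_monotone _ hle)).trans huv).trans (hbv.symm.mono (comap_monotone _ hle))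
  subst hab
  exact hau.symm.trans hbv

theorem OneExtendable.not_meetsMultipleComponents (hH : OneExtendable H) (hle : H ≤ G)
    {B : Set V} (hBne : B.Nonempty) (hBH : IsBarrier H B) (hBG : IsBarrier G B) {C : Set V}
    (hC : G.IsClique C) : ¬ MeetsMultipleComponents H B C := by
  intro hmeet
  obtain ⟨u, v, hu, hv, huv⟩ := meetsMultipleComponents_iff.1 hmeet
  have hne : (u : V) ≠ v := fun h => huv (Subtype.ext h ▸ Reachable.refl u)
  exact huv (hH.reachable_of_le hle hBne hBH hBG (Adj.reachable (G := G.induce _) (hC hu hv hne)))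

end Supergraph

section FillGraph

variable {H : SimpleGraph V} {I : Set (Set V)}

theorem fillGraph_adj {u v : V} :
    (fillGraph H I).Adj u v ↔ H.Adj u v ∨ (u ≠ v ∧ ∃ B ∈ I, u ∈ B ∧ v ∈ B) := by
  simp only [fillGraph, sup_adj, fromRel_adj]
  constructor
  · rintro (h | ⟨hne, ⟨B, hB, hu, hv⟩ | ⟨B, hB, hv, hu⟩⟩)
    · exact Or.inl h
    · exact Or.inr ⟨hne, B, hB, hu, hv⟩
    · exact Or.inr ⟨hne, B, hB, hu, hv⟩
  · rintro (h | ⟨hne, hB⟩)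
    · exact Or.inl h
    · exact Or.inr ⟨hne, Or.inl hB⟩

theorem le_fillGraph : H ≤ fillGraph H I := le_sup_left

theorem IsCoverSet.isPartition (hI : IsCoverSet H I) : Setoid.IsPartition I :=
  ⟨fun h => Set.not_nonempty_empty (hI.1 ∅ h).1, hI.2.2⟩

theorem IsCoverSet.reachable_of_reachable_fillGraph (hI : IsCoverSet H I) {B : Set V}
    (hB : B ∈ I) {u v : (Bᶜ : Set V)} (huv : ((fillGraph H I).induce Bᶜ).Reachable u v) :
    (H.induce Bᶜ).Reachable u v := by
  refine huv.of_forall_adj fun a b hab => ?_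
  rcases fillGraph_adj.1 hab with h | ⟨-, B', hB', ha, hb⟩
  · exact Adj.reachable h
  · have hne : B ≠ B' := fun h => a.2 (h ▸ ha)
    by_contra hnot
    exact hI.2.1 B hB B' hB' hne <|
      Or.inr <| Or.inr <| meetsMultipleComponents_iff.2 ⟨a, b, ha, hb, hnot⟩

variable [Finite V]

theorem IsCoverSet.isBarrier_fillGraph (hI : IsCoverSet H I)
    (hPM : ∃ M : H.Subgraph, M.IsPerfectMatching) {B : Set V} (hB : B ∈ I) :
    IsBarrier (fillGraph H I) B :=
  let ⟨_, hM⟩ := hPM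
  (hI.1 B hB).2.of_le_of_reachable le_fillGraph hM fun _ _ =>
    hI.reachable_of_reachable_fillGraph hB

theorem IsCoverSet.numPM_fillGraph (hI : IsCoverSet H I)
    (hPM : ∃ M : H.Subgraph, M.IsPerfectMatching) : numPM (fillGraph H I) = numPM H := by
  refine (numPM_eq_iff le_fillGraph).2 fun N hN u v huv => ?_
  rcases fillGraph_adj.1 (N.adj_sub huv) with h | ⟨-, B, hB, hu, hv⟩
  · exact h
  · exact absurd huv ((hI.isBarrier_fillGraph hPM hB).not_adj_of_isPerfectMatching hN hu hv)

theorem IsCoverSet.freeSubgraph_fillGraph_adj (hI : IsCoverSet H I) (hH : OneExtendable H)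
    {u v : V} :
    (freeSubgraph (fillGraph H I)).Adj u v ↔ u ≠ v ∧ ∃ B ∈ I, u ∈ B ∧ v ∈ B := by
  change (fillGraph H I).Adj u v ∧ ¬ IsExtendableEdge _ u v ↔ _
  rw [fillGraph_adj]
  constructor
  · rintro ⟨h | h, hfree⟩
    · exact absurd ((hH.2.2 h).mono le_fillGraph) hfree
    · exact h
  · rintro ⟨hne, B, hB, hu, hv⟩
    exact ⟨Or.inr ⟨hne, B, hB, hu, hv⟩, fun ⟨N, hN, huv⟩ =>
      (hI.isBarrier_fillGraph hH.2.1 hB).not_adj_of_isPerfectMatching hN hu hv huv⟩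

theorem IsCoverSet.exists_mem_and_mem_iff (hI : IsCoverSet H I) (hH : OneExtendable H) {u v : V} :
    (∃ B ∈ I, u ∈ B ∧ v ∈ B) ↔ u = v ∨ ((fillGraph H I).Adj u v ∧ ¬ H.Adj u v) := by
  rw [fillGraph_adj]
  constructor
  · rintro ⟨B, hB, hu, hv⟩
    by_cases huv : u = v
    · exact Or.inl huv
    · exact Or.inr ⟨Or.inr ⟨huv, B, hB, hu, hv⟩, hH.not_adj_of_isBarrier (hI.1 B hB).2 hu hv⟩
  · rintro (rfl | ⟨h | ⟨-, hB⟩, hnot⟩)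
    · obtain ⟨B, ⟨hB, hu⟩, -⟩ := hI.2.2 u
      exact ⟨B, hB, hu, hu⟩
    · exact absurd h hnot
    · exact hB

theorem injOn_fillGraph (hH : OneExtendable H) : Set.InjOn (fillGraph H) {I | IsCoverSet H I} :=
  fun I₁ h₁ I₂ h₂ heq => h₁.isPartition.eq_of_forall_exists_mem_iff h₂.isPartition fun u v => by
    rw [h₁.exists_mem_and_mem_iff hH, h₂.exists_mem_and_mem_iff hH, heq]

end FillGraph

theorem exists_isCoverSet_fillGraph_eq [Finite V] {H G : SimpleGraph V} (hH : OneExtendable H)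
    (hG : G ∈ elemSupergraphs H) {J : Set (Set V)} (hJ : ∀ v : V, ∃! B, B ∈ J ∧ v ∈ B)
    (hJG : ∀ B ∈ J, IsBarrier G B)
    (hfree : ∀ u v : V, (freeSubgraph G).Adj u v ↔ (u ≠ v ∧ ∃ B ∈ J, u ∈ B ∧ v ∈ B)) :
    ∃ I, IsCoverSet H I ∧ fillGraph H I = G := by
  obtain ⟨hle, hnum⟩ := hG
  obtain ⟨M, hM⟩ := hH.2.1
  set I : Set (Set V) := {B | B ∈ J ∧ B.Nonempty}
  have hI : ∀ v : V, ∃! B, B ∈ I ∧ v ∈ B := fun v =>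
    let ⟨B, ⟨hB, hv⟩, huniq⟩ := hJ v
    ⟨B, ⟨⟨hB, v, hv⟩, hv⟩, fun B' hB' => huniq B' ⟨hB'.1.1, hB'.2⟩⟩
  have hIH : ∀ B ∈ I, IsBarrier H B := fun B hB => (hJG B hB.1).of_le hle hM
  have hclique : ∀ B ∈ J, G.IsClique B := fun B hB u hu v hv hne =>
    ((hfree u v).2 ⟨hne, B, hB, hu, hv⟩).1
  have hmeet : ∀ B₁ ∈ I, ∀ B₂ ∈ I, ¬ MeetsMultipleComponents H B₂ B₁ := fun B₁ hB₁ B₂ hB₂ =>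
    hH.not_meetsMultipleComponents hle hB₂.2 (hIH B₂ hB₂) (hJG B₂ hB₂.1) (hclique B₁ hB₁.1)
  refine ⟨I, ⟨fun B hB => ⟨hB.2, hIH B hB⟩, ?_, hI⟩, ?_⟩
  · rintro B₁ hB₁ B₂ hB₂ hne (⟨v, hv₁, hv₂⟩ | hm | hm)
    · exact hne ((hI v).unique ⟨hB₁, hv₁⟩ ⟨hB₂, hv₂⟩)
    · exact hmeet B₁ hB₁ B₂ hB₂ hm
    · exact hmeet B₂ hB₂ B₁ hB₁ hm
  · ext u v
    rw [fillGraph_adj]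
    constructor
    · rintro (h | ⟨hne, B, hB, hu, hv⟩)
      · exact hle h
      · exact ((hfree u v).2 ⟨hne, B, hB.1, hu, hv⟩).1
    · intro huv
      by_cases hext : IsExtendableEdge G u v
      · obtain ⟨N, hN, hNuv⟩ := hext
        exact Or.inl ((numPM_eq_iff hle).1 hnum N hN u v hNuv)
      · obtain ⟨hne, B, hB, hu, hv⟩ := (hfree u v).1 ⟨huv, hext⟩
        exact Or.inr ⟨hne, B, ⟨hB, u, hu⟩, hu, hv⟩

/-- filling in the parts of a cover set is a bijection between `𝒞(H)` and
the graphs in `ℰ(H)` whose free subgraph is a disjoint union of cliques, each of which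
is a barrier. -/
theorem coverSet_fillGraph_bijOn [Finite V] (H : SimpleGraph V) (hH : OneExtendable H) :
    Set.BijOn (fillGraph H) {I : Set (Set V) | IsCoverSet H I}
      {G : SimpleGraph V | G ∈ elemSupergraphs H ∧
        ∃ J : Set (Set V), (∀ v : V, ∃! B, B ∈ J ∧ v ∈ B) ∧
          (∀ B ∈ J, IsBarrier G B) ∧
          ∀ u v : V, (freeSubgraph G).Adj u v ↔ (u ≠ v ∧ ∃ B ∈ J, u ∈ B ∧ v ∈ B)} := by
  refine ⟨fun I hI => ⟨⟨le_fillGraph, hI.numPM_fillGraph hH.2.1⟩, I, hI.2.2,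
      fun B hB => hI.isBarrier_fillGraph hH.2.1 hB, fun _ _ => hI.freeSubgraph_fillGraph_adj hH⟩,
    injOn_fillGraph hH, fun G ⟨hG, J, hJ, hJG, hfree⟩ => ?_⟩
  exact exists_isCoverSet_fillGraph_eq hH hG hJ hJG hfree
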